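/- arXiv:2408.13795 — 2 statements merged into one kernel-verified Lean document; each statement's English description precedes it below -/
import Mathlib

section
/- Let s, t ∈ ℝ, y* ∈ ℝⁿ, and let the lsc function f : ℝⁿ → ℝ ∪ {∞} be variationally s-convex at x̄ ∈ dom f for x̄* ∈ ∂f(x̄). Then the function ψ := f + ⟨y*, · − x̄⟩ + (t/2)‖· − x̄‖² is variationally (s+t)-convex at x̄ for x̄* + y*. -/
open scoped RealInnerProductSpace
open Filter Topology Metric Matrix

noncomputable section

abbrev En (n : ℕ) := EuclideanSpace ℝ (Fin n)

variable {n : ℕ}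

/-- The regular (Fréchet) subdifferential of an extended-real-valued function. -/
def FSubdiff (f : En n → EReal) (x : En n) : Set (En n) :=
  {v | ∀ c : ℝ, 0 < c → ∃ δ > (0:ℝ), ∀ y ∈ ball x δ,
    f x + ((⟪v, y - x⟫ - c * ‖y - x‖ : ℝ) : EReal) ≤ f y}

/-- The limiting (Mordukhovich) subdifferential, via f-attentive convergence. -/
def LSubdiff (f : En n → EReal) (x : En n) : Set (En n) :=
  {v | ∃ xs vs : ℕ → En n, (∀ k, vs k ∈ FSubdiff f (xs k)) ∧
    Tendsto xs atTop (𝓝 x) ∧ Tendsto (fun k => f (xs k)) atTop (𝓝 (f x)) ∧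
    Tendsto vs atTop (𝓝 v)}

/-- The graph of the f-attentive ε-localization of the subdifferential around (x̄, x̄*). -/
def GphT (f : En n → EReal) (xb xbs : En n) (ε : ℝ) : Set (En n × En n) :=
  {p | p.2 ∈ LSubdiff f p.1 ∧ f p.1 < f xb + (ε : EReal) ∧
       p.1 ∈ ball xb ε ∧ p.2 ∈ ball xbs ε}

/-- Prox-regularity of f at x̄ for x̄* with parameters r ≥ 0 and ε > 0. -/
def ProxReg (f : En n → EReal) (xb xbs : En n) (r ε : ℝ) : Prop :=
  (∃ a : ℝ, f xb = (a : EReal)) ∧ xbs ∈ LSubdiff f xb ∧ 0 ≤ r ∧ 0 < ε ∧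
  ∀ x' ∈ ball xb ε, ∀ p ∈ GphT f xb xbs ε,
    f p.1 + ((⟪p.2, x' - p.1⟫ - r / 2 * ‖x' - p.1‖ ^ 2 : ℝ) : EReal) ≤ f x'

/-- Variational s-convexity of f at x̄ for x̄*. -/
def VarConv (f : En n → EReal) (s : ℝ) (xb xbs : En n) : Prop :=
  (∃ a : ℝ, f xb = (a : EReal)) ∧ xbs ∈ LSubdiff f xb ∧
  ∃ (U V : Set (En n)) (fh : En n → EReal) (ρ : ℝ),
    IsOpen U ∧ Convex ℝ U ∧ xb ∈ U ∧ IsOpen V ∧ Convex ℝ V ∧ xbs ∈ V ∧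
    LowerSemicontinuous fh ∧ f xb < (ρ : EReal) ∧
    -- fh - (s/2)‖·‖² is convex on U
    (∀ x ∈ U, ∀ y ∈ U, ∀ a b : ℝ, 0 ≤ a → 0 ≤ b → a + b = 1 →
      fh (a • x + b • y) +
        ((s / 2 * (a * ‖x‖ ^ 2 + b * ‖y‖ ^ 2 - ‖a • x + b • y‖ ^ 2) : ℝ) : EReal)
        ≤ (a : EReal) * fh x + (b : EReal) * fh y) ∧
    (∀ x ∈ U, fh x ≤ f x) ∧
    ({p : En n × En n | p.2 ∈ LSubdiff f p.1 ∧ f p.1 < (ρ : EReal)} ∩ U ×ˢ V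
      = {p : En n × En n | p.2 ∈ LSubdiff fh p.1} ∩ U ×ˢ V) ∧
    (∀ p ∈ {p : En n × En n | p.2 ∈ LSubdiff f p.1 ∧ f p.1 < (ρ : EReal)} ∩ U ×ˢ V,
      f p.1 = fh p.1)

/-! Adding `q x = ⟪y*, x - x̄⟫ + (t/2)‖x - x̄‖²`, a smooth function with gradient
`y* + t (x - x̄)`, translates the limiting subdifferential by that gradient and raises the
convexity modulus by `t`, so `f̂ + q` witnesses the variational convexity of `ψ`. The
neighbourhoods have to shrink because the translation depends on `x`, and the level has to change
because `ψ` and `f` differ by `q`: near `x̄` the function `q` is small, and on `gph ∂f̂` the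
`s`-subgradient inequality at `x̄` bounds `f̂ x` above by `f x̄ + o(1)`, so on small enough
neighbourhoods any level strictly between `f x̄` and `ρ` works for `ψ`. -/

lemma EReal.add_coe_add_coe_neg (u : EReal) (r : ℝ) : u + r + ((-r : ℝ) : EReal) = u := by
  rw [add_assoc, ← EReal.coe_add, add_neg_cancel, EReal.coe_zero, add_zero]

lemma EReal.coe_mul_add_coe {a : ℝ} (ha : 0 ≤ a) (u : EReal) (r : ℝ) :
    (a : EReal) * (u + r) = a * u + ((a * r : ℝ) : EReal) := by
  rw [EReal.left_distrib_of_nonneg_of_ne_top (EReal.coe_nonneg.mpr ha) (EReal.coe_ne_top a),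
    EReal.coe_mul]

lemma EReal.coe_add_le_of_coe_add_mul_le {r J θ : ℝ} {w : EReal} (hθ : 0 < θ)
    (h : ((r + θ * J : ℝ) : EReal) ≤ ((1 - θ) * r : ℝ) + (θ : EReal) * w) :
    ((r + J : ℝ) : EReal) ≤ w := by
  induction w using EReal.rec with
  | bot =>
    rw [EReal.coe_mul_bot_of_pos hθ, EReal.add_bot, le_bot_iff] at h
    exact absurd h (EReal.coe_ne_bot _)
  | coe q =>
    norm_cast at h ⊢
    nlinarith
  | top => exact le_top

lemma EReal.add_coe_lt_coe_of_add_coe_le {u : EReal} {c d e d' : ℝ} (h : u + c ≤ d)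
    (h' : d - c + e < d') : u + e < d' := by
  have hu : u ≤ ((d - c : ℝ) : EReal) := by
    rw [EReal.coe_sub,
      EReal.le_sub_iff_add_le (.inl (EReal.coe_ne_bot c)) (.inl (EReal.coe_ne_top c))]
    exact h
  calc u + e ≤ ((d - c : ℝ) : EReal) + e := add_le_add_left hu _
    _ < d' := by exact_mod_cast h'

lemma Filter.Tendsto.ereal_add_coe {α : Type*} {l : Filter α} {u : α → EReal} {r : α → ℝ}
    {L : EReal} {R : ℝ} (hu : Tendsto u l (𝓝 L)) (hr : Tendsto r l (𝓝 R)) :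
    Tendsto (fun k => u k + (r k : EReal)) l (𝓝 (L + R)) :=
  (EReal.continuousAt_add (.inr (EReal.coe_ne_bot R)) (.inr (EReal.coe_ne_top R))).tendsto.comp
    (hu.prodMk_nhds (EReal.tendsto_coe.mpr hr))

lemma LowerSemicontinuous.ereal_add_coe {α : Type*} [TopologicalSpace α] {f : α → EReal}
    {g : α → ℝ} (hf : LowerSemicontinuous f) (hg : Continuous g) :
    LowerSemicontinuous (fun x => f x + (g x : EReal)) :=
  hf.add' (continuous_coe_real_ereal.comp hg).lowerSemicontinuous fun _ =>
    EReal.continuousAt_add (.inr (EReal.coe_ne_bot _)) (.inr (EReal.coe_ne_top _))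

section Quadratic

variable {E : Type*} [NormedAddCommGroup E] [InnerProductSpace ℝ E]

def quadTilt (w : E) (t : ℝ) (x₀ x : E) : ℝ := ⟪w, x - x₀⟫ + t / 2 * ‖x - x₀‖ ^ 2

lemma quadTilt_eq_add (w : E) (t : ℝ) (x₀ z y : E) :
    quadTilt w t x₀ y
      = quadTilt w t x₀ z + ⟪w + t • (z - x₀), y - z⟫ + t / 2 * ‖y - z‖ ^ 2 := by
  have h : y - x₀ = (y - z) + (z - x₀) := by abel
  rw [quadTilt, quadTilt, h, norm_add_sq_real, inner_add_left, inner_add_right,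
    real_inner_smul_left, real_inner_comm (y - z) (z - x₀)]
  ring

lemma hasGradientAt_quadTilt [CompleteSpace E] (w : E) (t : ℝ) (x₀ x : E) :
    HasGradientAt (quadTilt w t x₀) (w + t • (x - x₀)) x := by
  rw [hasGradientAt_iff_isLittleO]
  have h : (fun y => ‖y - x‖ ^ 2) =o[𝓝 x] fun y => y - x :=
    (Asymptotics.isLittleO_norm_pow_id one_lt_two).comp_tendsto
      (tendsto_sub_nhds_zero_iff.mpr tendsto_id)
  refine (h.const_mul_left (t / 2)).congr_left fun y => ?_
  rw [quadTilt_eq_add w t x₀ x y]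
  ring

lemma continuous_quadTilt (w : E) (t : ℝ) (x₀ : E) : Continuous (quadTilt w t x₀) := by
  unfold quadTilt
  fun_prop

lemma quadTilt_convexComb (w : E) (t : ℝ) (x₀ x y : E) {a b : ℝ} (hab : a + b = 1) :
    a * quadTilt w t x₀ x + b * quadTilt w t x₀ y
      = quadTilt w t x₀ (a • x + b • y)
        + t / 2 * (a * ‖x‖ ^ 2 + b * ‖y‖ ^ 2 - ‖a • x + b • y‖ ^ 2) := by
  obtain rfl : b = 1 - a := by linarith
  simp only [quadTilt, ← real_inner_self_eq_norm_sq, inner_add_left, inner_add_right,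
    inner_sub_left, inner_sub_right, real_inner_smul_left, real_inner_smul_right]
  rw [real_inner_comm y x, real_inner_comm x₀ x, real_inner_comm x₀ y]
  ring

-- the convexity clause of `VarConv`: `f - (s/2)‖·‖²` is convex on `U`
def SConvexOn (s : ℝ) (U : Set E) (f : E → EReal) : Prop :=
  ∀ x ∈ U, ∀ y ∈ U, ∀ a b : ℝ, 0 ≤ a → 0 ≤ b → a + b = 1 →
    f (a • x + b • y) + ((s / 2 * (a * ‖x‖ ^ 2 + b * ‖y‖ ^ 2 - ‖a • x + b • y‖ ^ 2) : ℝ) : EReal)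
      ≤ (a : EReal) * f x + (b : EReal) * f y

lemma SConvexOn.mono {s : ℝ} {U V : Set E} {f : E → EReal} (h : SConvexOn s U f)
    (hVU : V ⊆ U) : SConvexOn s V f :=
  fun x hx y hy => h x (hVU hx) y (hVU hy)

lemma SConvexOn.add_quadTilt {s : ℝ} {U : Set E} {f : E → EReal} (h : SConvexOn s U f)
    (w : E) (t : ℝ) (x₀ : E) :
    SConvexOn (s + t) U (fun x => f x + (quadTilt w t x₀ x : EReal)) := by
  intro x hx y hy a b ha hb hab
  set m := a • x + b • y
  set Q := a * ‖x‖ ^ 2 + b * ‖y‖ ^ 2 - ‖m‖ ^ 2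
  calc f m + ↑(quadTilt w t x₀ m) + ↑((s + t) / 2 * Q)
      = f m + ↑(s / 2 * Q) + ↑(a * quadTilt w t x₀ x + b * quadTilt w t x₀ y) := by
        rw [add_assoc, add_assoc, ← EReal.coe_add, ← EReal.coe_add,
          quadTilt_convexComb w t x₀ x y hab]
        congr 2
        ring
    _ ≤ a * f x + b * f y + ↑(a * quadTilt w t x₀ x + b * quadTilt w t x₀ y) :=
        add_le_add_left (h x hx y hy a b ha hb hab) _
    _ = a * (f x + ↑(quadTilt w t x₀ x)) + b * (f y + ↑(quadTilt w t x₀ y)) := by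
        rw [EReal.coe_mul_add_coe ha, EReal.coe_mul_add_coe hb, EReal.coe_add]
        abel

end Quadratic

section Subdifferential

variable {f : En n → EReal} {g : En n → ℝ} {z v : En n}

lemma HasGradientAt.neg {g' : En n} (hg : HasGradientAt g g' z) :
    HasGradientAt (fun x => -g x) (-g') z := by
  rw [hasGradientAt_iff_hasFDerivAt, map_neg]
  exact hg.hasFDerivAt.neg

lemma add_mem_FSubdiff_add {g' : En n} (hg : HasGradientAt g g' z) (hv : v ∈ FSubdiff f z) :
    v + g' ∈ FSubdiff (fun x => f x + g x) z := by
  intro c hc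
  obtain ⟨δ₁, hδ₁, hf⟩ := hv (c / 2) (half_pos hc)
  obtain ⟨δ₂, hδ₂, hg⟩ := Metric.eventually_nhds_iff_ball.mp
    ((hasGradientAt_iff_isLittleO.mp hg).def (half_pos hc))
  refine ⟨min δ₁ δ₂, lt_min hδ₁ hδ₂, fun y hy => ?_⟩
  have hgy := abs_le.mp (hg y (ball_subset_ball (min_le_right _ _) hy))
  have key : g z + (⟪v + g', y - z⟫ - c * ‖y - z‖)
      ≤ (⟪v, y - z⟫ - c / 2 * ‖y - z‖) + g y := by
    rw [inner_add_left]
    linarith [hgy.1]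
  calc f z + ↑(g z) + ↑(⟪v + g', y - z⟫ - c * ‖y - z‖)
      ≤ f z + ↑(⟪v, y - z⟫ - c / 2 * ‖y - z‖) + ↑(g y) := by
        rw [add_assoc, add_assoc, ← EReal.coe_add, ← EReal.coe_add]
        exact add_le_add_right (EReal.coe_le_coe_iff.mpr key) _
    _ ≤ f y + g y := add_le_add_left (hf y (ball_subset_ball (min_le_left _ _) hy)) _

lemma mem_FSubdiff_add_iff {g' : En n} (hg : HasGradientAt g g' z) :
    v ∈ FSubdiff (fun x => f x + g x) z ↔ v - g' ∈ FSubdiff f z := by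
  refine ⟨fun hv => ?_, fun hv => by simpa using add_mem_FSubdiff_add hg hv⟩
  simpa only [EReal.add_coe_add_coe_neg, ← sub_eq_add_neg] using add_mem_FSubdiff_add hg.neg hv

variable {g' : En n → En n}

lemma add_mem_LSubdiff_add (hg : ∀ x, HasGradientAt g (g' x) x) (hg' : Continuous g')
    (hv : v ∈ LSubdiff f z) : v + g' z ∈ LSubdiff (fun x => f x + g x) z := by
  obtain ⟨xs, vs, hF, hxs, hfxs, hvs⟩ := hv
  refine ⟨xs, fun k => vs k + g' (xs k), fun k => add_mem_FSubdiff_add (hg _) (hF k), hxs,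
    hfxs.ereal_add_coe (((hg z).continuousAt.tendsto).comp hxs),
    hvs.add ((hg'.tendsto z).comp hxs)⟩

lemma mem_LSubdiff_add_iff (hg : ∀ x, HasGradientAt g (g' x) x) (hg' : Continuous g') :
    v ∈ LSubdiff (fun x => f x + g x) z ↔ v - g' z ∈ LSubdiff f z := by
  refine ⟨fun hv => ?_, fun hv => by simpa using add_mem_LSubdiff_add hg hg' hv⟩
  simpa only [EReal.add_coe_add_coe_neg, ← sub_eq_add_neg] using
    add_mem_LSubdiff_add (fun x => (hg x).neg) hg'.neg hv

end Subdifferential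

section SubgradientInequality

variable {k : En n → EReal} {U : Set (En n)} {z y u : En n}

lemma exists_le_segment_of_mem_FSubdiff (hu : u ∈ FSubdiff k z) (y : En n) {c : ℝ}
    (hc : 0 < c) :
    ∃ θ : ℝ, 0 < θ ∧ θ ≤ 1 ∧
      k z + ((θ * (⟪u, y - z⟫ - c * ‖y - z‖) : ℝ) : EReal) ≤ k (z + θ • (y - z)) := by
  obtain ⟨δ, hδ, h⟩ := hu c hc
  have hseg : Tendsto (fun θ : ℝ => z + θ • (y - z)) (𝓝[>] 0) (𝓝 z) := by
    have : Continuous fun θ : ℝ => z + θ • (y - z) := by fun_prop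
    simpa using (this.tendsto 0).mono_left nhdsWithin_le_nhds
  obtain ⟨θ, hball, hθ⟩ :=
    ((hseg.eventually (ball_mem_nhds z hδ)).and (Ioc_mem_nhdsGT one_pos)).exists
  refine ⟨θ, hθ.1, hθ.2, ?_⟩
  convert h _ hball using 3
  rw [add_sub_cancel_left, real_inner_smul_right, norm_smul, Real.norm_eq_abs, abs_of_pos hθ.1]
  ring

lemma SConvexOn.add_inner_le_of_mem_FSubdiff (hk : SConvexOn 0 U k) (hz : z ∈ U) (hy : y ∈ U)
    (hkz : k z ≠ ⊤) (hu : u ∈ FSubdiff k z) :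
    k z + (⟪u, y - z⟫ : EReal) ≤ k y := by
  induction hr : k z using EReal.rec with
  | bot => simp
  | top => exact absurd hr hkz
  | coe r =>
    have hc : ∀ c > 0, ((r + (⟪u, y - z⟫ - c * ‖y - z‖) : ℝ) : EReal) ≤ k y := by
      intro c hc
      obtain ⟨θ, hθ0, hθ1, hθ⟩ := exists_le_segment_of_mem_FSubdiff hu y hc
      have hcv := hk z hz y hy (1 - θ) θ (by linarith) hθ0.le (by ring)
      rw [show (1 - θ) • z + θ • y = z + θ • (y - z) by module, zero_div, zero_mul,
        EReal.coe_zero, add_zero, hr, ← EReal.coe_mul] at hcv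
      rw [hr, ← EReal.coe_add] at hθ
      exact EReal.coe_add_le_of_coe_add_mul_le hθ0 (hθ.trans hcv)
    have hlim : Tendsto (fun c : ℝ => ((r + (⟪u, y - z⟫ - c * ‖y - z‖) : ℝ) : EReal)) (𝓝[>] 0)
        (𝓝 ((r + ⟪u, y - z⟫ : ℝ) : EReal)) := by
      have hcont : Continuous fun c : ℝ => r + (⟪u, y - z⟫ - c * ‖y - z‖) := by fun_prop
      simpa using EReal.tendsto_coe.mpr ((hcont.tendsto 0).mono_left nhdsWithin_le_nhds)
    rw [← EReal.coe_add]
    exact le_of_tendsto hlim (eventually_nhdsWithin_of_forall hc)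

lemma SConvexOn.add_inner_add_sq_le_of_mem_FSubdiff {s : ℝ} (hk : SConvexOn s U k) (hz : z ∈ U)
    (hy : y ∈ U) (hkz : k z ≠ ⊤) (hu : u ∈ FSubdiff k z) :
    k z + ((⟪u, y - z⟫ + s / 2 * ‖y - z‖ ^ 2 : ℝ) : EReal) ≤ k y := by
  -- subtracting `(s/2)‖·‖²` reduces to the convex case
  set q := quadTilt (0 : En n) (-s) 0
  set q' : En n := 0 + -s • (z - 0)
  have hconv : SConvexOn 0 U (fun x => k x + q x) := by
    simpa only [add_neg_cancel] using hk.add_quadTilt 0 (-s) 0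
  have hsub : u + q' ∈ FSubdiff (fun x => k x + q x) z :=
    (mem_FSubdiff_add_iff (hasGradientAt_quadTilt 0 (-s) 0 z)).mpr
      (by rwa [add_sub_cancel_right])
  have h := hconv.add_inner_le_of_mem_FSubdiff hz hy
    (EReal.add_ne_top hkz (EReal.coe_ne_top _)) hsub
  set c := q z + ⟪q', y - z⟫ + -s / 2 * ‖y - z‖ ^ 2
  rw [show q y = c from quadTilt_eq_add 0 (-s) 0 z y] at h
  rw [← (EReal.addLECancellable_coe c).add_le_add_iff_right]
  convert h using 1
  rw [add_assoc (k z), add_assoc (k z), ← EReal.coe_add, ← EReal.coe_add, inner_add_left u q']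
  congr 2
  ring

lemma SConvexOn.add_inner_add_sq_le_of_mem_LSubdiff {s : ℝ} (hk : SConvexOn s U k)
    (hU : IsOpen U) (hz : z ∈ U) (hy : y ∈ U) (hkz : k z ≠ ⊤) (hu : u ∈ LSubdiff k z) :
    k z + ((⟪u, y - z⟫ + s / 2 * ‖y - z‖ ^ 2 : ℝ) : EReal) ≤ k y := by
  obtain ⟨zs, us, hF, hzs, hkzs, hus⟩ := hu
  have hlim : Tendsto (fun j => ⟪us j, y - zs j⟫ + s / 2 * ‖y - zs j‖ ^ 2) atTop
      (𝓝 (⟪u, y - z⟫ + s / 2 * ‖y - z‖ ^ 2)) := by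
    have h : Tendsto (fun j => y - zs j) atTop (𝓝 (y - z)) := tendsto_const_nhds.sub hzs
    exact (hus.inner h).add ((h.norm.pow 2).const_mul _)
  refine le_of_tendsto (hkzs.ereal_add_coe hlim) ?_
  filter_upwards [hzs.eventually_mem (hU.mem_nhds hz),
    hkzs.eventually_ne hkz] with j hjU hjk
  exact hk.add_inner_add_sq_le_of_mem_FSubdiff hjU hy hjk (hF j)

end SubgradientInequality

lemma exists_radii_tilt {U V : Set (En n)} {xb xbs : En n} (hU : IsOpen U) (hV : IsOpen V)
    (hxb : xb ∈ U) (hxbs : xbs ∈ V) (s t : ℝ) (ystar : En n) {ε : ℝ} (hε : 0 < ε) :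
    ∃ δ > 0, ∃ r > 0, ball xb δ ⊆ U ∧ ball xbs r ⊆ V ∧
      (∀ x ∈ ball xb δ, |quadTilt ystar t xb x| < ε) ∧
      (∀ x ∈ ball xb δ, ∀ v ∈ ball xbs r, -ε < ⟪v, xb - x⟫ + s / 2 * ‖xb - x‖ ^ 2) ∧
      (∀ x ∈ ball xb δ, ∀ xv ∈ ball (xbs + ystar) (r / 2),
        xv - (ystar + t • (x - xb)) ∈ ball xbs r) := by
  have hinner : ∀ᶠ p in 𝓝 (xb, xbs), -ε < ⟪p.2, xb - p.1⟫ + s / 2 * ‖xb - p.1‖ ^ 2 := by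
    have h : Continuous fun p : En n × En n => ⟪p.2, xb - p.1⟫ + s / 2 * ‖xb - p.1‖ ^ 2 := by
      fun_prop
    exact continuousAt_const.eventually_lt h.continuousAt (by simpa using hε)
  obtain ⟨U₁, hU₁, V₁, hV₁, hUV⟩ := mem_nhds_prod_iff.mp hinner
  obtain ⟨r, hr, hrV⟩ := Metric.mem_nhds_iff.mp (inter_mem (hV.mem_nhds hxbs) hV₁)
  have hq : ∀ᶠ x in 𝓝 xb, |quadTilt ystar t xb x| < ε :=
    (continuous_quadTilt ystar t xb).continuousAt.abs.eventually_lt continuousAt_const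
      (by simpa [quadTilt] using hε)
  have hshift : ∀ᶠ x in 𝓝 xb, ‖t • (x - xb)‖ < r / 2 := by
    have h : Continuous fun x => ‖t • (x - xb)‖ := by fun_prop
    exact h.continuousAt.eventually_lt continuousAt_const (by simpa using half_pos hr)
  obtain ⟨δ, hδ, hδU⟩ := Metric.mem_nhds_iff.mp
    (inter_mem (hU.mem_nhds hxb) (inter_mem hU₁ (hq.and hshift)))
  refine ⟨δ, hδ, r, hr, fun x hx => (hδU hx).1, fun v hv => (hrV hv).1,
    fun x hx => (hδU hx).2.2.1, fun x hx v hv => hUV (Set.mk_mem_prod (hδU hx).2.1 (hrV hv).2),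
    fun x hx xv hxv => ?_⟩
  rw [mem_ball_iff_norm] at hxv ⊢
  calc ‖xv - (ystar + t • (x - xb)) - xbs‖ = ‖(xv - (xbs + ystar)) - t • (x - xb)‖ := by
        congr 1; abel
    _ ≤ ‖xv - (xbs + ystar)‖ + ‖t • (x - xb)‖ := norm_sub_le _ _
    _ < r := by linarith [(hδU hx).2.2.2]

lemma localization_tilt {f fh : En n → EReal} {g : En n → ℝ} {g' : En n → En n}
    (hg : ∀ x, HasGradientAt g (g' x) x) (hg' : Continuous g')
    {U V U' V' W : Set (En n)} {ρ ρ' : ℝ}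
    (hgraph : {p : En n × En n | p.2 ∈ LSubdiff f p.1 ∧ f p.1 < (ρ : EReal)} ∩ U ×ˢ V
      = {p : En n × En n | p.2 ∈ LSubdiff fh p.1} ∩ U ×ˢ V)
    (heq : ∀ p ∈ {p : En n × En n | p.2 ∈ LSubdiff f p.1 ∧ f p.1 < (ρ : EReal)} ∩ U ×ˢ V,
      f p.1 = fh p.1)
    (hU' : U' ⊆ U) (hW : W ⊆ V) (hshift : ∀ x ∈ U', ∀ xv ∈ V', xv - g' x ∈ W)
    (hlevel : ∀ x ∈ U', f x + g x < (ρ' : EReal) → f x < ρ)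
    (hlevel' : ∀ x ∈ U', ∀ v ∈ W, v ∈ LSubdiff fh x → fh x < ρ →
      fh x + g x < (ρ' : EReal)) :
    {p : En n × En n | p.2 ∈ LSubdiff (fun x => f x + g x) p.1 ∧
        f p.1 + g p.1 < (ρ' : EReal)} ∩ U' ×ˢ V'
      = {p : En n × En n | p.2 ∈ LSubdiff (fun x => fh x + g x) p.1} ∩ U' ×ˢ V' ∧
    ∀ p ∈ {p : En n × En n | p.2 ∈ LSubdiff (fun x => f x + g x) p.1 ∧
        f p.1 + g p.1 < (ρ' : EReal)} ∩ U' ×ˢ V', f p.1 + g p.1 = fh p.1 + g p.1 := by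
  have hfwd : ∀ x ∈ U', ∀ v ∈ W, v ∈ LSubdiff f x → f x < ρ →
      v ∈ LSubdiff fh x ∧ f x = fh x := fun x hx v hv h h' =>
    have hp : (x, v) ∈ {p : En n × En n | p.2 ∈ LSubdiff f p.1 ∧ f p.1 < (ρ : EReal)}
        ∩ U ×ˢ V := ⟨⟨h, h'⟩, hU' hx, hW hv⟩
    ⟨((Set.ext_iff.mp hgraph _).mp hp).1, heq _ hp⟩
  have hbwd : ∀ x ∈ U', ∀ v ∈ W, v ∈ LSubdiff fh x → v ∈ LSubdiff f x ∧ f x < ρ :=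
    fun x hx v hv h => ((Set.ext_iff.mp hgraph (x, v)).mpr ⟨h, hU' hx, hW hv⟩).1
  refine ⟨?_, ?_⟩
  · ext ⟨x, xv⟩
    simp only [Set.mem_inter_iff, Set.mem_ofPred_eq, Set.mem_prod,
      mem_LSubdiff_add_iff hg hg']
    refine ⟨fun ⟨⟨h, h'⟩, hx, hxv⟩ =>
      ⟨(hfwd x hx _ (hshift x hx xv hxv) h (hlevel x hx h')).1, hx, hxv⟩, fun ⟨h, hx, hxv⟩ => ?_⟩
    obtain ⟨h₁, h₂⟩ := hbwd x hx _ (hshift x hx xv hxv) h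
    have h₃ := (hfwd x hx _ (hshift x hx xv hxv) h₁ h₂).2
    refine ⟨⟨h₁, ?_⟩, hx, hxv⟩
    rw [h₃] at h₂ ⊢
    exact hlevel' x hx _ (hshift x hx xv hxv) h h₂
  · rintro ⟨x, xv⟩ ⟨⟨h, h'⟩, hx, hxv⟩
    rw [mem_LSubdiff_add_iff hg hg'] at h
    rw [(hfwd x hx _ (hshift x hx xv hxv) h (hlevel x hx h')).2]

theorem stmt8_general (f : En n → EReal) (s t : ℝ) (xb xbs ystar : En n)
    (hvc : VarConv f s xb xbs) :
    VarConv
      (fun x => f x + ((⟪ystar, x - xb⟫ + t / 2 * ‖x - xb‖ ^ 2 : ℝ) : EReal))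
      (s + t) xb (xbs + ystar) := by
  show VarConv (fun x => f x + (quadTilt ystar t xb x : EReal)) (s + t) xb (xbs + ystar)
  obtain ⟨⟨a, ha⟩, hxbs, U, V, fh, ρ, hU, -, hxbU, hV, -, hxbsV, hfh, hρ, hconv, hle, hgraph,
    heq⟩ := hvc
  have haρ : a < ρ := EReal.coe_lt_coe_iff.mp (ha ▸ hρ)
  -- the new level is `(a + ρ) / 2`, with slack `(ρ - a) / 4` for `q` and for the subgradient term
  obtain ⟨δ, hδ, r, hr, hδU, hrV, hq, hsub, hshift⟩ :=
    exists_radii_tilt hU hV hxbU hxbsV s t ystar (by linarith : 0 < (ρ - a) / 4)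
  have hq' := hasGradientAt_quadTilt ystar t xb
  have hq'c : Continuous fun x => ystar + t • (x - xb) := by fun_prop
  have hqxb : quadTilt ystar t xb xb = 0 := by simp [quadTilt]
  have hlevel : ∀ x ∈ ball xb δ,
      f x + quadTilt ystar t xb x < (((a + ρ) / 2 : ℝ) : EReal) → f x < ρ := fun x hx h => by
    simpa using EReal.add_coe_lt_coe_of_add_coe_le (e := 0) h.le
      (by linarith [(abs_lt.mp (hq x hx)).1])
  have hlevel' : ∀ x ∈ ball xb δ, ∀ v ∈ ball xbs r, v ∈ LSubdiff fh x → fh x < ρ →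
      fh x + quadTilt ystar t xb x < (((a + ρ) / 2 : ℝ) : EReal) := by
    intro x hx v hv h h'
    have hineq := SConvexOn.add_inner_add_sq_le_of_mem_LSubdiff hconv hU (hδU hx) hxbU
      (h'.trans (EReal.coe_lt_top ρ)).ne h
    refine EReal.add_coe_lt_coe_of_add_coe_le (hineq.trans ((hle xb hxbU).trans ha.le)) ?_
    linarith [(abs_lt.mp (hq x hx)).2, hsub x hx v hv]
  obtain ⟨hgraph', heq'⟩ :=
    localization_tilt hq' hq'c hgraph heq hδU hrV hshift hlevel hlevel'
  refine ⟨⟨a, by simp [hqxb, ha]⟩,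
    (mem_LSubdiff_add_iff hq' hq'c).mpr (by simpa using hxbs),
    ball xb δ, ball (xbs + ystar) (r / 2), fun x => fh x + quadTilt ystar t xb x, (a + ρ) / 2,
    isOpen_ball, convex_ball _ _, mem_ball_self hδ, isOpen_ball, convex_ball _ _,
    mem_ball_self (half_pos hr), hfh.ereal_add_coe (continuous_quadTilt ystar t xb), ?_,
    (SConvexOn.add_quadTilt hconv ystar t xb).mono hδU,
    fun x hx => add_le_add_left (hle x (hδU hx)) _, hgraph', heq'⟩
  simpa [hqxb, ha] using (by linarith : a < (a + ρ) / 2)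

theorem stmt8 (f : En n → EReal) (s t : ℝ) (xb xbs ystar : En n)
    (hf : LowerSemicontinuous f) (hvc : VarConv f s xb xbs) :
    VarConv
      (fun x => f x + ((⟪ystar, x - xb⟫ + t / 2 * ‖x - xb‖ ^ 2 : ℝ) : EReal))
      (s + t) xb (xbs + ystar) :=
  stmt8_general f s t xb xbs ystar hvc
end
end

section
/- Let f : ℝⁿ → ℝ ∪ {∞} be lsc and prox-regular at x̄ ∈ dom f for x̄* ∈ ∂f(x̄), and let g : ℝⁿ → ℝ be twice continuously differentiable. Then f + g is prox-regular at x̄ for the subgradient x̄* + ∇g(x̄) ∈ ∂(f+g)(x̄). -/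
/-! Adding a smooth `g` shifts subgradients by `∇g`: Fréchet subgradients pointwise, limiting
subgradients along `f`-attentive sequences because `g` and `∇g` are continuous. Near `x̄` the
derivative of `g` is `K`-Lipschitz, so `g x' ≥ g x + ⟪∇g x, x' - x⟫ - K ‖x' - x‖²`; adding this to
the prox-regularity inequality of `f` at the shifted pair `(x, x* - ∇g x)` gives prox-regularity
of `f + g` with constant `r + 2K`. The radius is shrunk so that, by continuity of `g` and `∇g`,
the shifted pair stays in the localization of `∂f` around `(x̄, x̄*)`. -/

open scoped RealInnerProductSpace
open Filter Topology Metric Matrix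

noncomputable section

variable {n : ℕ}

theorem EReal.add_coe_add_coe_le {u v : EReal} {a b c d : ℝ} (h : u + a ≤ v)
    (hr : b + c ≤ a + d) : u + b + c ≤ v + d :=
  calc u + b + c = u + ((b + c : ℝ) : EReal) := by rw [add_assoc, EReal.coe_add]
    _ ≤ u + ((a + d : ℝ) : EReal) := add_le_add_right (EReal.coe_le_coe_iff.mpr hr) _
    _ = u + a + d := by rw [EReal.coe_add, add_assoc]
    _ ≤ v + d := add_le_add_left h _

theorem Filter.Tendsto.add_coe_ereal {α : Type*} {l : Filter α} {u : α → EReal} {w : α → ℝ}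
    {a : EReal} {b : ℝ} (hu : Tendsto u l (𝓝 a)) (hw : Tendsto w l (𝓝 b)) :
    Tendsto (fun k => u k + (w k : EReal)) l (𝓝 (a + b)) :=
  (EReal.continuousAt_add (Or.inr (EReal.coe_ne_bot b)) (Or.inr (EReal.coe_ne_top b))).tendsto.comp
    (hu.prodMk_nhds ((continuous_coe_real_ereal.tendsto b).comp hw))

theorem ContDiff.continuous_gradient {E : Type*} [NormedAddCommGroup E] [InnerProductSpace ℝ E]
    [CompleteSpace E] {g : E → ℝ} (hg : ContDiff ℝ 1 g) : Continuous (gradient g) :=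
  (InnerProductSpace.toDual ℝ E).symm.continuous.comp (hg.continuous_fderiv one_ne_zero)

theorem ContDiff.hasGradientAt {E : Type*} [NormedAddCommGroup E] [InnerProductSpace ℝ E]
    [CompleteSpace E] {g : E → ℝ} (hg : ContDiff ℝ 1 g) (y : E) :
    HasGradientAt g (gradient g y) y :=
  (hg.differentiable one_ne_zero y).hasGradientAt

theorem norm_sub_sub_fderiv_le_of_lipschitzOnWith {E F : Type*} [NormedAddCommGroup E]
    [NormedSpace ℝ E] [NormedAddCommGroup F] [NormedSpace ℝ F] {g : E → F} {s : Set E}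
    {K : NNReal} (hs : Convex ℝ s) (hg : ∀ y ∈ s, DifferentiableAt ℝ g y)
    (hlip : LipschitzOnWith K (fderiv ℝ g) s) {x y : E} (hx : x ∈ s) (hy : y ∈ s) :
    ‖g y - g x - fderiv ℝ g x (y - x)‖ ≤ K * ‖y - x‖ ^ 2 := by
  have hseg : segment ℝ x y ⊆ s := hs.segment_subset hx hy
  have hder : ∀ z ∈ segment ℝ x y, HasFDerivWithinAt (fun z => g z - fderiv ℝ g x z)
      (fderiv ℝ g z - fderiv ℝ g x) (segment ℝ x y) z := fun z hz =>
    ((hg z (hseg hz)).hasFDerivAt.sub (fderiv ℝ g x).hasFDerivAt).hasFDerivWithinAt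
  have hbound : ∀ z ∈ segment ℝ x y, ‖fderiv ℝ g z - fderiv ℝ g x‖ ≤ K * ‖y - x‖ := by
    intro z hz
    calc ‖fderiv ℝ g z - fderiv ℝ g x‖ ≤ K * ‖z - x‖ := by
          simpa only [dist_eq_norm] using hlip.dist_le_mul z (hseg hz) x hx
      _ ≤ K * ‖y - x‖ := by gcongr; exact norm_sub_le_of_mem_segment hz
  have := (convex_segment x y).norm_image_sub_le_of_norm_hasFDerivWithin_le hder hbound
    (left_mem_segment ℝ x y) (right_mem_segment ℝ x y)
  calc ‖g y - g x - fderiv ℝ g x (y - x)‖ = ‖g y - fderiv ℝ g x y - (g x - fderiv ℝ g x x)‖ := by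
        rw [map_sub]; congr 1; abel
    _ ≤ K * ‖y - x‖ * ‖y - x‖ := this
    _ = K * ‖y - x‖ ^ 2 := by ring

theorem mem_FSubdiff_add {f : En n → EReal} {g : En n → ℝ} {x v G : En n}
    (hv : v ∈ FSubdiff f x) (hg : HasGradientAt g G x) :
    v + G ∈ FSubdiff (fun y => f y + (g y : EReal)) x := by
  intro c hc
  obtain ⟨δ₁, hδ₁, hf⟩ := hv (c / 2) (half_pos hc)
  obtain ⟨δ₂, hδ₂, hgx⟩ := Metric.eventually_nhds_iff_ball.mp
    (hg.hasFDerivAt.isLittleO.def (half_pos hc))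
  refine ⟨min δ₁ δ₂, lt_min hδ₁ hδ₂, fun y hy => EReal.add_coe_add_coe_le
    (hf y (ball_subset_ball (min_le_left _ _) hy)) ?_⟩
  have hlin := (abs_le.mp (hgx y (ball_subset_ball (min_le_right _ _) hy))).1
  rw [inner_add_left]
  simp only [InnerProductSpace.toDual_apply_apply] at hlin
  linarith

theorem mem_LSubdiff_add {f : En n → EReal} {g : En n → ℝ} {G : En n → En n} {x v : En n}
    (hv : v ∈ LSubdiff f x) (hg : ∀ y, HasGradientAt g (G y) y) (hG : Continuous G) :
    v + G x ∈ LSubdiff (fun y => f y + (g y : EReal)) x := by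
  obtain ⟨xs, vs, hF, hxs, hfxs, hvs⟩ := hv
  have hgc : Continuous g := continuous_iff_continuousAt.mpr fun y => (hg y).continuousAt
  exact ⟨xs, fun k => vs k + G (xs k), fun k => mem_FSubdiff_add (hF k) (hg (xs k)), hxs,
    hfxs.add_coe_ereal ((hgc.tendsto x).comp hxs), hvs.add ((hG.tendsto x).comp hxs)⟩

theorem sub_mem_LSubdiff_of_mem_LSubdiff_add {f : En n → EReal} {g : En n → ℝ}
    {G : En n → En n} {x w : En n} (hw : w ∈ LSubdiff (fun y => f y + (g y : EReal)) x)
    (hg : ∀ y, HasGradientAt g (G y) y) (hG : Continuous G) : w - G x ∈ LSubdiff f x := by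
  have hneg : ∀ y, HasGradientAt (fun y => -g y) (-G y) y := fun y => by
    rw [hasGradientAt_iff_hasFDerivAt, map_neg]
    exact (hg y).hasFDerivAt.neg
  simpa only [EReal.coe_neg, ← sub_eq_add_neg, EReal.add_sub_cancel_right] using
    mem_LSubdiff_add hw hneg hG.neg

section SmoothPerturbation

variable {f : En n → EReal} {g : En n → ℝ} {xb xbs : En n} {ε ε' : ℝ}

theorem mem_GphT_of_mem_GphT_add (hg : ContDiff ℝ 1 g) (hε' : ε' ≤ ε / 2)
    (hloc : ∀ y ∈ ball xb ε',
      dist (g y) (g xb) < ε / 2 ∧ dist (gradient g y) (gradient g xb) < ε / 2)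
    {p : En n × En n} (hp : p ∈ GphT (fun x => f x + (g x : EReal)) xb (xbs + gradient g xb) ε') :
    (p.1, p.2 - gradient g p.1) ∈ GphT f xb xbs ε := by
  obtain ⟨hpL, hpf, hp1, hp2⟩ := hp
  obtain ⟨hgp, hGp⟩ := hloc p.1 hp1
  rw [Real.dist_eq, abs_lt] at hgp
  refine ⟨sub_mem_LSubdiff_of_mem_LSubdiff_add hpL hg.hasGradientAt hg.continuous_gradient,
    ?_, ball_subset_ball (by linarith [dist_nonneg (x := p.1) (y := xb), mem_ball.mp hp1]) hp1, ?_⟩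
  · refine lt_of_add_lt_add_right (a := (g p.1 : EReal)) (hpf.trans_le ?_)
    rw [add_assoc, add_assoc]
    rw [← EReal.coe_add, ← EReal.coe_add]
    exact add_le_add_right (EReal.coe_le_coe_iff.mpr (by linarith)) _
  · rw [mem_ball] at hp2 ⊢
    calc dist (p.2 - gradient g p.1) xbs
        = ‖(p.2 - (xbs + gradient g xb)) - (gradient g p.1 - gradient g xb)‖ := by
          rw [dist_eq_norm]; congr 1; abel
      _ ≤ dist p.2 (xbs + gradient g xb) + dist (gradient g p.1) (gradient g xb) :=
          norm_sub_le _ _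
      _ < ε := by linarith

theorem ProxReg.add_of_lipschitzOnWith {r : ℝ} {K : NNReal} (hpr : ProxReg f xb xbs r ε)
    (hg : ContDiff ℝ 1 g) (hlip : LipschitzOnWith K (fderiv ℝ g) (ball xb ε'))
    (hε'pos : 0 < ε') (hε' : ε' ≤ ε / 2)
    (hloc : ∀ y ∈ ball xb ε',
      dist (g y) (g xb) < ε / 2 ∧ dist (gradient g y) (gradient g xb) < ε / 2) :
    ProxReg (fun x => f x + (g x : EReal)) xb (xbs + gradient g xb) (r + 2 * K) ε' := by
  obtain ⟨⟨a, ha⟩, hsub, hr, -, hprox⟩ := hpr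
  refine ⟨⟨a + g xb, by dsimp only; rw [ha, EReal.coe_add]⟩,
    mem_LSubdiff_add hsub hg.hasGradientAt hg.continuous_gradient, by positivity, hε'pos,
    fun x' hx' p hp => ?_⟩
  have hf := hprox x' (ball_subset_ball (by linarith) hx') _
    (mem_GphT_of_mem_GphT_add hg hε' hloc hp)
  have htaylor := norm_sub_sub_fderiv_le_of_lipschitzOnWith (convex_ball xb ε')
    (fun y _ => hg.differentiable one_ne_zero y) hlip hp.2.2.1 hx'
  rw [Real.norm_eq_abs, ← InnerProductSpace.toDual_symm_apply] at htaylor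
  change |_ - _ - ⟪gradient g p.1, _⟫| ≤ _ at htaylor
  refine EReal.add_coe_add_coe_le hf ?_
  rw [inner_sub_left]
  linarith [(abs_le.mp htaylor).1]

end SmoothPerturbation

theorem stmt19_general (f : En n → EReal) (xb xbs : En n)
    (hpr : ∃ r ε : ℝ, ProxReg f xb xbs r ε)
    (g : En n → ℝ) (hg : ContDiff ℝ 2 g) :
    ∃ r ε : ℝ, ProxReg (fun x => f x + ((g x : ℝ) : EReal)) xb
      (xbs + gradient g xb) r ε := by
  obtain ⟨r, ε, hpr⟩ := hpr
  have hε : 0 < ε := hpr.2.2.2.1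
  have hg1 : ContDiff ℝ 1 g := hg.of_le one_le_two
  obtain ⟨K, t, ht, hlip⟩ :=
    ((hg.fderiv_right (m := 1) le_rfl).contDiffAt (x := xb)).exists_lipschitzOnWith
  have hnear : ∀ᶠ y in 𝓝 xb, y ∈ t ∧
      dist (g y) (g xb) < ε / 2 ∧ dist (gradient g y) (gradient g xb) < ε / 2 :=
    Filter.Eventually.and ht
      ((Metric.tendsto_nhds.mp (hg1.continuous.tendsto xb) _ (half_pos hε)).and
        (Metric.tendsto_nhds.mp (hg1.continuous_gradient.tendsto xb) _ (half_pos hε)))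
  obtain ⟨δ, hδ, hball⟩ := Metric.eventually_nhds_iff_ball.mp hnear
  have hsmall : ball xb (min δ (ε / 2)) ⊆ ball xb δ := ball_subset_ball (min_le_left _ _)
  exact ⟨r + 2 * K, min δ (ε / 2),
    hpr.add_of_lipschitzOnWith hg1 (hlip.mono fun y hy => (hball y (hsmall hy)).1)
      (lt_min hδ (half_pos hε)) (min_le_right _ _) fun y hy => (hball y (hsmall hy)).2⟩

theorem stmt19 (f : En n → EReal) (xb xbs : En n)
    (hlsc : LowerSemicontinuous f) (hfin : ∃ a : ℝ, f xb = (a : EReal))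
    (hpr : ∃ r ε : ℝ, ProxReg f xb xbs r ε)
    (g : En n → ℝ) (hg : ContDiff ℝ 2 g) :
    ∃ r ε : ℝ, ProxReg (fun x => f x + ((g x : ℝ) : EReal)) xb
      (xbs + gradient g xb) r ε :=
  stmt19_general f xb xbs hpr g hg
end
end
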